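/- arXiv:1808.04202 — 2 statements merged into one kernel-verified Lean document; each statement's English description precedes it below -/
import Mathlib

section
/- Let d ≥ 3, G open convex with B_{2ρ}(0) ⊂ G ⊂ B_R(0), 0 < ρ, and suppose vol(G) > ω_d (2ρ)^d. Then the infimum of (1/2)∫_G |∇u|² over u ∈ W^{1,2}(G) vanishing on B_ρ(0) with ∫_G |u|² = 1 is at most 2^d ω_d ρ^{d−2} / (vol(G) − ω_d (2ρ)^d). -/
/-!
The bound comes from the Rayleigh quotient of one radial test function: vanishing on `B_ρ`,
equal to `1` outside `B_{2ρ}`, with gradient of norm at most `4 / (3ρ)` in between. Its squared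
`L²`-norm on `G` is at least `vol G - ω_d (2ρ)^d`, its Dirichlet energy at most
`(4 / (3ρ))² ω_d (2ρ)^d`, and `(1/2) (4/3)² ≤ 1`.
-/

open MeasureTheory Metric Set Filter Asymptotics Topology

lemma hasDerivAt_max_zero_sq (s : ℝ) :
    HasDerivAt (fun t : ℝ => max t 0 ^ 2) (2 * max s 0) s := by
  rcases lt_trichotomy s 0 with hs | rfl | hs
  · rw [max_eq_right hs.le, mul_zero]
    refine (hasDerivAt_const s (0 : ℝ)).congr_of_eventuallyEq ?_
    filter_upwards [Iio_mem_nhds hs] with t (ht : t < 0)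
    simp [max_eq_right ht.le]
  · rw [max_self, mul_zero, hasDerivAt_iff_isLittleO]
    simp only [max_self, sub_zero, ne_eq, OfNat.ofNat_ne_zero, not_false_eq_true, zero_pow,
      smul_zero]
    refine IsBigO.trans_isLittleO ?_ (isLittleO_pow_id one_lt_two)
    refine IsBigO.of_bound 1 (Eventually.of_forall fun t => ?_)
    rw [one_mul, norm_pow, norm_pow]
    gcongr
    rw [Real.norm_eq_abs, Real.norm_eq_abs, abs_of_nonneg (le_max_right t 0)]
    exact max_le (le_abs_self t) (abs_nonneg t)
  · rw [max_eq_left hs.le]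
    refine ((hasDerivAt_pow 2 s).congr_of_eventuallyEq ?_).congr_deriv (by ring)
    filter_upwards [Ioi_mem_nhds hs] with t (ht : 0 < t)
    simp [max_eq_left ht.le]

/-- A `C¹` substitute for the clamp `s ↦ min (max s 0) 1`: its derivative is the trapezoid
rising linearly on `[0, 1/4]`, equal to `4/3` on `[1/4, 3/4]` and falling back to `0` on
`[3/4, 1]`. The final constant needs a maximal slope below `√2`. -/
noncomputable def smoothRamp (s : ℝ) : ℝ :=
  8 / 3 * (max s 0 ^ 2 - max (s - 1 / 4) 0 ^ 2 - max (s - 3 / 4) 0 ^ 2 + max (s - 1) 0 ^ 2)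

lemma hasDerivAt_smoothRamp (s : ℝ) : HasDerivAt smoothRamp
    (16 / 3 * (max s 0 - max (s - 1 / 4) 0 - max (s - 3 / 4) 0 + max (s - 1) 0)) s := by
  have shifted (a : ℝ) : HasDerivAt (fun t : ℝ => max (t - a) 0 ^ 2) (2 * max (s - a) 0) s := by
    simpa [Function.comp_def] using
      (hasDerivAt_max_zero_sq (s - a)).comp s ((hasDerivAt_id s).sub_const a)
  have h := ((((shifted 0).sub (shifted (1 / 4))).sub (shifted (3 / 4))).add
    (shifted 1)).const_mul (8 / 3 : ℝ)
  simp only [sub_zero] at h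
  exact h.congr_deriv (by ring)

lemma differentiable_smoothRamp : Differentiable ℝ smoothRamp :=
  fun s => (hasDerivAt_smoothRamp s).differentiableAt

lemma deriv_smoothRamp_mem_Icc (s : ℝ) : deriv smoothRamp s ∈ Icc 0 (4 / 3) := by
  rw [(hasDerivAt_smoothRamp s).deriv, mem_Icc]
  rcases max_cases s 0 with ⟨h₁, _⟩ | ⟨h₁, _⟩ <;>
  rcases max_cases (s - 1 / 4) 0 with ⟨h₂, _⟩ | ⟨h₂, _⟩ <;>
  rcases max_cases (s - 3 / 4) 0 with ⟨h₃, _⟩ | ⟨h₃, _⟩ <;>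
  rcases max_cases (s - 1) 0 with ⟨h₄, _⟩ | ⟨h₄, _⟩ <;>
  · rw [h₁, h₂, h₃, h₄]; constructor <;> linarith

lemma smoothRamp_of_nonpos {s : ℝ} (hs : s ≤ 0) : smoothRamp s = 0 := by
  simp only [smoothRamp, max_eq_right hs, max_eq_right (by linarith : s - 1 / 4 ≤ 0),
    max_eq_right (by linarith : s - 3 / 4 ≤ 0), max_eq_right (by linarith : s - 1 ≤ 0)]
  ring

lemma smoothRamp_of_one_le {s : ℝ} (hs : 1 ≤ s) : smoothRamp s = 1 := by
  simp only [smoothRamp, max_eq_left (by linarith : 0 ≤ s),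
    max_eq_left (by linarith : 0 ≤ s - 1 / 4),
    max_eq_left (by linarith : 0 ≤ s - 3 / 4), max_eq_left (by linarith : 0 ≤ s - 1)]
  ring

lemma monotone_smoothRamp : Monotone smoothRamp :=
  monotone_of_deriv_nonneg differentiable_smoothRamp fun s => (deriv_smoothRamp_mem_Icc s).1

lemma smoothRamp_mem_Icc (s : ℝ) : smoothRamp s ∈ Icc 0 1 :=
  ⟨(smoothRamp_of_nonpos (min_le_right s 0)).symm.le.trans (monotone_smoothRamp (min_le_left s 0)),
    (monotone_smoothRamp (le_max_left s 1)).trans (smoothRamp_of_one_le (le_max_right s 1)).le⟩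

lemma abs_smoothRamp_sub_le (a b : ℝ) : |smoothRamp a - smoothRamp b| ≤ 4 / 3 * |a - b| :=
  convex_univ.norm_image_sub_le_of_norm_deriv_le (fun s _ => differentiable_smoothRamp s)
    (fun s _ => abs_le.2 ⟨by linarith [(deriv_smoothRamp_mem_Icc s).1],
      (deriv_smoothRamp_mem_Icc s).2⟩) (mem_univ b) (mem_univ a)

section Radial

variable {E : Type*} [NormedAddCommGroup E] {ρ : ℝ}

/-- The paper's test function `min (max ((‖x‖ - ρ) / ρ) 0) 1` is not differentiable, so it is
smoothed by `smoothRamp`. -/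
noncomputable def radialRamp (ρ : ℝ) (x : E) : ℝ := smoothRamp ((‖x‖ - ρ) / ρ)

lemma radialRamp_of_norm_le (hρ : 0 < ρ) {x : E} (hx : ‖x‖ ≤ ρ) : radialRamp ρ x = 0 :=
  smoothRamp_of_nonpos (div_nonpos_of_nonpos_of_nonneg (by linarith) hρ.le)

lemma radialRamp_of_le_norm (hρ : 0 < ρ) {x : E} (hx : 2 * ρ ≤ ‖x‖) : radialRamp ρ x = 1 :=
  smoothRamp_of_one_le (by rw [le_div_iff₀ hρ]; linarith)

lemma radialRamp_mem_Icc (x : E) : radialRamp ρ x ∈ Icc 0 1 := smoothRamp_mem_Icc _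

lemma differentiable_radialRamp [InnerProductSpace ℝ E] (hρ : 0 < ρ) :
    Differentiable ℝ (radialRamp ρ : E → ℝ) := by
  intro x
  rcases eq_or_ne x 0 with rfl | hx
  · refine (differentiableAt_const (0 : ℝ)).congr_of_eventuallyEq ?_
    filter_upwards [ball_mem_nhds (0 : E) hρ] with y hy
    exact radialRamp_of_norm_le hρ (mem_ball_zero_iff.1 hy).le
  · exact differentiable_smoothRamp.differentiableAt.comp x
      (((differentiableAt_id.norm ℝ hx).sub_const ρ).mul_const ρ⁻¹)

lemma norm_fderiv_radialRamp_le [NormedSpace ℝ E] (hρ : 0 < ρ) (x : E) :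
    ‖fderiv ℝ (radialRamp ρ) x‖ ≤ 4 / (3 * ρ) := by
  refine norm_fderiv_le_of_lip' ℝ (by positivity) (Eventually.of_forall fun y => ?_)
  calc ‖radialRamp ρ y - radialRamp ρ x‖
      ≤ 4 / 3 * |(‖y‖ - ρ) / ρ - (‖x‖ - ρ) / ρ| := abs_smoothRamp_sub_le _ _
    _ = 4 / (3 * ρ) * |‖y‖ - ‖x‖| := by
        rw [← sub_div, sub_sub_sub_cancel_right, abs_div, abs_of_pos hρ]; ring
    _ ≤ 4 / (3 * ρ) * ‖y - x‖ := by gcongr; exact abs_norm_sub_norm_le y x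

lemma fderiv_radialRamp_of_lt_norm [NormedSpace ℝ E] (hρ : 0 < ρ) {x : E} (hx : 2 * ρ < ‖x‖) :
    fderiv ℝ (radialRamp ρ) x = 0 := by
  have hconst : radialRamp ρ =ᶠ[𝓝 x] fun _ => (1 : ℝ) := by
    filter_upwards [(isOpen_lt continuous_const continuous_norm).mem_nhds hx] with y hy
    exact radialRamp_of_le_norm hρ (le_of_lt hy)
  rw [hconst.fderiv_eq, fderiv_const_apply]

end Radial

section SetIntegral

variable {α : Type*} [MeasurableSpace α] {μ : Measure α} {f : α → ℝ} {G B : Set α}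

lemma sub_measureReal_le_setIntegral (hG : MeasurableSet G) (hB : MeasurableSet B)
    (hBfin : μ B ≠ ⊤) (hf : IntegrableOn f G μ) (hf₀ : ∀ x ∈ G, 0 ≤ f x)
    (hf₁ : ∀ x ∈ G \ B, f x = 1) :
    μ.real G - μ.real B ≤ ∫ x in G, f x ∂μ :=
  calc μ.real G - μ.real B ≤ μ.real (G \ B) := le_measureReal_sdiff hBfin
    _ = ∫ x in G \ B, f x ∂μ := by
        rw [setIntegral_congr_fun (hG.diff hB) hf₁, setIntegral_const, smul_eq_mul, mul_one]
    _ ≤ ∫ x in G, f x ∂μ :=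
        setIntegral_mono_set hf (ae_restrict_of_forall_mem hG hf₀) sdiff_subset.eventuallyLE

lemma setIntegral_le_mul_measureReal (hG : MeasurableSet G) (hB : MeasurableSet B)
    (hBfin : μ B ≠ ⊤) {C : ℝ} (hC : 0 ≤ C) (hf₀ : ∀ x ∈ G, 0 ≤ f x) (hfC : ∀ x ∈ G, f x ≤ C)
    (hf_off : ∀ x ∈ G \ B, f x = 0) :
    ∫ x in G, f x ∂μ ≤ C * μ.real B :=
  calc ∫ x in G, f x ∂μ ≤ ∫ x in G, B.indicator (fun _ => C) x ∂μ := by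
        refine integral_mono_of_nonneg (ae_restrict_of_forall_mem hG hf₀)
          ((integrableOn_const hBfin).integrable_indicator hB).integrableOn
          (ae_restrict_of_forall_mem hG fun x hx => ?_)
        by_cases hxB : x ∈ B
        · simpa [hxB] using hfC x hx
        · simp [hxB, hf_off x ⟨hx, hxB⟩]
    _ = C * μ.real (B ∩ G) := by
        rw [integral_indicator_const C hB, measureReal_restrict_apply hB, smul_eq_mul, mul_comm]
    _ ≤ C * μ.real B := by gcongr; exact inter_subset_left

end SetIntegral

section RadialIntegral

variable {E : Type*} [NormedAddCommGroup E] [MeasurableSpace E] [OpensMeasurableSpace E]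
  [ProperSpace E] {μ : Measure E} [IsFiniteMeasureOnCompacts μ] {G : Set E} {ρ : ℝ}

lemma sub_measureReal_closedBall_le_integral_sq_radialRamp (hρ : 0 < ρ) (hG : MeasurableSet G)
    (hGfin : μ G ≠ ⊤) :
    μ.real G - μ.real (closedBall (0 : E) (2 * ρ)) ≤ ∫ x in G, radialRamp ρ x ^ 2 ∂μ := by
  have hcont : Continuous fun x : E => radialRamp ρ x ^ 2 :=
    (differentiable_smoothRamp.continuous.comp
      ((continuous_norm.sub continuous_const).div_const ρ)).pow 2
  have hbound (x : E) : ‖radialRamp ρ x ^ 2‖ ≤ 1 := by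
    obtain ⟨h₀, h₁⟩ := radialRamp_mem_Icc (ρ := ρ) x
    rw [norm_pow, Real.norm_of_nonneg h₀]
    exact pow_le_one₀ h₀ h₁
  refine sub_measureReal_le_setIntegral hG measurableSet_closedBall
    measure_closedBall_lt_top.ne
    ((integrableOn_const hGfin).mono' hcont.aestronglyMeasurable (ae_of_all _ hbound))
    (fun x _ => sq_nonneg _) fun x hx => ?_
  have hx : 2 * ρ < ‖x‖ := by simpa using hx.2
  rw [radialRamp_of_le_norm hρ hx.le, one_pow]

lemma integral_sq_norm_fderiv_radialRamp_le [NormedSpace ℝ E] (hρ : 0 < ρ)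
    (hG : MeasurableSet G) :
    ∫ x in G, ‖fderiv ℝ (radialRamp ρ) x‖ ^ 2 ∂μ
      ≤ (4 / (3 * ρ)) ^ 2 * μ.real (closedBall (0 : E) (2 * ρ)) := by
  refine setIntegral_le_mul_measureReal hG measurableSet_closedBall
    measure_closedBall_lt_top.ne (by positivity) (fun x _ => sq_nonneg _)
    (fun x _ => pow_le_pow_left₀ (norm_nonneg _) (norm_fderiv_radialRamp_le hρ x) 2)
    fun x hx => ?_
  have hx : 2 * ρ < ‖x‖ := by simpa using hx.2
  rw [fderiv_radialRamp_of_lt_norm hρ hx, norm_zero, sq, zero_mul]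

end RadialIntegral

section Rayleigh

variable {E : Type*} [NormedAddCommGroup E] [NormedSpace ℝ E] [MeasurableSpace E]

/-- The paper's `λ^{G,S}`, with differentiable functions in place of `W^{1,2}(G)`. -/
noncomputable def bottomOfSpectrum (μ : Measure E) (G S : Set E) : ℝ :=
  sInf {e : ℝ | ∃ u : E → ℝ,
    DifferentiableOn ℝ u G ∧
    (∀ x ∈ S, u x = 0) ∧
    (∫ x in G, (u x) ^ 2 ∂μ) = 1 ∧
    e = (1 / 2) * ∫ x in G, ‖fderivWithin ℝ u G x‖ ^ 2 ∂μ}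

lemma bottomOfSpectrum_le_rayleighQuotient [OpensMeasurableSpace E] {μ : Measure E}
    {G S : Set E} (hG : IsOpen G) {v : E → ℝ} (hv : DifferentiableOn ℝ v G)
    (hvS : ∀ x ∈ S, v x = 0)
    (hQ : 0 < ∫ x in G, v x ^ 2 ∂μ) :
    bottomOfSpectrum μ G S
      ≤ 1 / 2 * (∫ x in G, ‖fderiv ℝ v x‖ ^ 2 ∂μ) / ∫ x in G, v x ^ 2 ∂μ := by
  set Q := ∫ x in G, v x ^ 2 ∂μ
  set c := (√Q)⁻¹
  have hc : c ^ 2 = Q⁻¹ := by rw [inv_pow, Real.sq_sqrt hQ.le]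
  refine csInf_le ⟨0, ?_⟩ ⟨fun x => c * v x, hv.const_mul c, fun x hx => by simp [hvS x hx], ?_, ?_⟩
  · rintro _ ⟨u, -, -, -, rfl⟩
    exact mul_nonneg (by norm_num) (integral_nonneg fun x => sq_nonneg _)
  · simp only [mul_pow]
    rw [integral_const_mul, hc, inv_mul_cancel₀ hQ.ne']
  · have hderiv : ∀ x ∈ G,
        ‖fderivWithin ℝ (fun y => c * v y) G x‖ ^ 2 = Q⁻¹ * ‖fderiv ℝ v x‖ ^ 2 := by
      intro x hx
      rw [fderivWithin_of_isOpen hG hx,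
        fderiv_const_mul ((hv x hx).differentiableAt (hG.mem_nhds hx)), norm_smul, mul_pow,
        Real.norm_eq_abs, sq_abs, hc]
    rw [setIntegral_congr_fun hG.measurableSet hderiv, integral_const_mul]
    ring

end Rayleigh

theorem stmt_2_general (d : ℕ) (hd : 3 ≤ d) (ρ : ℝ) (hρ : 0 < ρ)
    (G : Set (EuclideanSpace ℝ (Fin d))) (hGo : IsOpen G)
    (hvol : (volume (ball (0 : EuclideanSpace ℝ (Fin d)) 1)).toReal * (2 * ρ) ^ d
      < (volume G).toReal) :
    sInf {e : ℝ | ∃ u : EuclideanSpace ℝ (Fin d) → ℝ,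
        DifferentiableOn ℝ u G ∧
        (∀ x ∈ closedBall (0 : EuclideanSpace ℝ (Fin d)) ρ, u x = 0) ∧
        (∫ x in G, (u x) ^ 2) = 1 ∧
        e = (1 / 2) * ∫ x in G, ‖fderivWithin ℝ u G x‖ ^ 2} ≤
      2 ^ d * (volume (ball (0 : EuclideanSpace ℝ (Fin d)) 1)).toReal * ρ ^ (d - 2) /
        ((volume G).toReal
          - (volume (ball (0 : EuclideanSpace ℝ (Fin d)) 1)).toReal * (2 * ρ) ^ d) := by
  simp only [← measureReal_def] at hvol ⊢
  set ω := volume.real (ball (0 : EuclideanSpace ℝ (Fin d)) 1)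
  have hball :
      volume.real (closedBall (0 : EuclideanSpace ℝ (Fin d)) (2 * ρ)) = ω * (2 * ρ) ^ d := by
    rw [Measure.addHaar_real_closedBall _ _ (by positivity), finrank_euclideanSpace_fin, mul_comm]
  have hD : 0 < volume.real G - ω * (2 * ρ) ^ d := sub_pos.2 hvol
  have hGfin : volume G ≠ ⊤ :=
    (ENNReal.toReal_pos_iff.1 ((by positivity : 0 ≤ ω * (2 * ρ) ^ d).trans_lt hvol)).2.ne
  have hQ := hball ▸ sub_measureReal_closedBall_le_integral_sq_radialRamp hρ hGo.measurableSet hGfin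
  have hEnergy := hball ▸ integral_sq_norm_fderiv_radialRamp_le (μ := volume) hρ hGo.measurableSet
  have hρd : ρ ^ d = ρ ^ (d - 2) * ρ ^ 2 := by rw [← pow_add, Nat.sub_add_cancel (by omega)]
  calc bottomOfSpectrum volume G (closedBall 0 ρ)
      ≤ 1 / 2 * (∫ x in G, ‖fderiv ℝ (radialRamp ρ) x‖ ^ 2) / ∫ x in G, radialRamp ρ x ^ 2 :=
        bottomOfSpectrum_le_rayleighQuotient hGo (differentiable_radialRamp hρ).differentiableOn
          (fun x hx => radialRamp_of_norm_le hρ (mem_closedBall_zero_iff.1 hx)) (hD.trans_le hQ)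
    _ ≤ 1 / 2 * ((4 / (3 * ρ)) ^ 2 * (ω * (2 * ρ) ^ d)) / (volume.real G - ω * (2 * ρ) ^ d) := by
        gcongr
    _ = 8 / 9 * (2 ^ d * ω * ρ ^ (d - 2)) / (volume.real G - ω * (2 * ρ) ^ d) := by
        rw [mul_pow, hρd]
        field_simp
        ring
    _ ≤ 2 ^ d * ω * ρ ^ (d - 2) / (volume.real G - ω * (2 * ρ) ^ d) := by
        refine div_le_div_of_nonneg_right ?_ hD.le
        linarith [(by positivity : 0 ≤ 2 ^ d * ω * ρ ^ (d - 2))]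

theorem stmt_2 (d : ℕ) (hd : 3 ≤ d) (ρ R : ℝ) (hρ : 0 < ρ)
    (G : Set (EuclideanSpace ℝ (Fin d))) (hGo : IsOpen G) (hGc : Convex ℝ G)
    (h1 : closedBall (0 : EuclideanSpace ℝ (Fin d)) (2 * ρ) ⊆ G)
    (h2 : G ⊆ closedBall (0 : EuclideanSpace ℝ (Fin d)) R)
    (hvol : (volume (ball (0 : EuclideanSpace ℝ (Fin d)) 1)).toReal * (2 * ρ) ^ d
      < (volume G).toReal) :
    sInf {e : ℝ | ∃ u : EuclideanSpace ℝ (Fin d) → ℝ,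
        DifferentiableOn ℝ u G ∧
        (∀ x ∈ closedBall (0 : EuclideanSpace ℝ (Fin d)) ρ, u x = 0) ∧
        (∫ x in G, (u x) ^ 2) = 1 ∧
        e = (1 / 2) * ∫ x in G, ‖fderivWithin ℝ u G x‖ ^ 2} ≤
      2 ^ d * (volume (ball (0 : EuclideanSpace ℝ (Fin d)) 1)).toReal * ρ ^ (d - 2) /
        ((volume G).toReal
          - (volume (ball (0 : EuclideanSpace ℝ (Fin d)) 1)).toReal * (2 * ρ) ^ d) :=
  stmt_2_general d hd ρ hρ G hGo hvol
end

section
/- Let G ⊂ ℝ^d be open and convex and let S ⊂ G be (R,ρ)-relatively dense in G. Then there exists a set Σ ⊂ S such that: (a) B_ρ(p) ⊂ S for all p ∈ Σ and the union ⋃_{p∈Σ} B_ρ(p) is (3R,ρ)-relatively dense in G; (b) ⋃_{p∈Σ} B_{3R}(p) ⊇ closure(G); (c) for every p ∈ Σ with Σ \ {p} ≠ ∅, R ≤ dist(p, Σ \ {p}) ≤ 6R. -/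
/-!
Take a maximal `R`-separated family `T` of centres of `ρ`-balls contained in `S`. By maximality
every such centre lies within `R` of `T`, and by relative density every point of `G` lies within
`R` of such a centre, so `T` is a `2R`-net of `G`; this gives (a) and (b). For (c), if `q ∈ T` is
far from `p`, the point of the segment `[p, q] ⊆ G` at distance `4R` from `p` has a net point
within `2R`, which is a point of `T \ {p}` within `6R` of `p`; separation gives the lower
bound `R`.
-/

open MeasureTheory Metric Set

/-- `S` is `(R,ρ)`-relatively dense in `G`: for every `x ∈ G` there is `y ∈ S`
with `B_R(x) ∩ S ⊇ B_ρ(y)`. -/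
def RelDense (d : ℕ) (R ρ : ℝ) (S G : Set (EuclideanSpace ℝ (Fin d))) : Prop :=
  ∀ x ∈ G, ∃ y ∈ S, closedBall y ρ ⊆ closedBall x R ∩ S

theorem exists_maximal_subset_pairwise {α : Type*} (s : Set α) (r : α → α → Prop) :
    ∃ t, Maximal (fun t => t ⊆ s ∧ t.Pairwise r) t :=
  zorn_subset _ fun c hcs hc =>
    ⟨⋃₀ c, ⟨sUnion_subset fun _ ht => (hcs ht).1, hc.pairwise_sUnion.2 fun _ ht => (hcs ht).2⟩,
      fun _ => subset_sUnion_of_mem⟩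

theorem Metric.exists_separated_cover {X : Type*} [PseudoMetricSpace X] {r : ℝ} (hr : 0 < r)
    (s : Set X) :
    ∃ t ⊆ s, t.Pairwise (fun x y => r ≤ dist x y) ∧ ∀ x ∈ s, ∃ y ∈ t, dist x y < r := by
  let U : SetRel X X := {xy | dist xy.1 xy.2 < r}
  have : U.IsRefl := ⟨fun x => by simpa [U] using hr⟩
  have : U.IsSymm := ⟨fun x y h => by simpa [U, dist_comm] using h⟩
  obtain ⟨t, ht⟩ : ∃ t, Maximal (fun t => t ⊆ s ∧ SetRel.IsSeparated U t) t :=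
    exists_maximal_subset_pairwise s _
  refine ⟨t, ht.1.1, ht.1.2.mono' fun x y h => ?_, SetRel.IsCover.of_maximal_isSeparated ht⟩
  simpa [U] using h

theorem Metric.le_infDist_diff_singleton_of_pairwise {X : Type*} [PseudoMetricSpace X] {r : ℝ}
    {t : Set X} (ht : t.Pairwise (fun x y => r ≤ dist x y)) {p : X} (hp : p ∈ t)
    (hne : (t \ {p}).Nonempty) : r ≤ infDist p (t \ {p}) :=
  (le_infDist hne).2 fun _ hq => ht hp hq.1 (Ne.symm hq.2)

theorem Convex.infDist_diff_singleton_le {E : Type*} [NormedAddCommGroup E] [NormedSpace ℝ E]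
    {G t : Set E} {r : ℝ} (hG : Convex ℝ G) (htG : t ⊆ G)
    (hnet : ∀ x ∈ G, ∃ y ∈ t, dist x y < r) {p : E} (hp : p ∈ t) (hne : (t \ {p}).Nonempty) :
    infDist p (t \ {p}) ≤ 3 * r := by
  obtain ⟨q, hq⟩ := hne
  obtain ⟨_, -, hp_near⟩ := hnet p (htG hp)
  have hr : 0 < r := dist_nonneg.trans_lt hp_near
  rcases le_or_gt (dist p q) (3 * r) with hpq | hpq
  · exact (infDist_le_dist_of_mem hq).trans hpq
  set z := AffineMap.lineMap p q (2 * r / dist p q)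
  have hpq0 : 0 < dist p q := by linarith
  have hzp : dist z p = 2 * r := by
    rw [dist_lineMap_left, Real.norm_of_nonneg (by positivity), div_mul_cancel₀ _ hpq0.ne']
  have hz : z ∈ G := hG.lineMap_mem (htG hp) (htG hq.1)
    ⟨by positivity, (div_le_one hpq0).2 (by linarith)⟩
  obtain ⟨p', hp', hzp'⟩ := hnet z hz
  have hpp' : dist p p' < 3 * r := by
    linarith [dist_triangle p z p', dist_comm z p]
  have hp'p : p' ≠ p := by
    rintro rfl
    linarith
  exact (infDist_le_dist_of_mem (mem_sdiff_singleton.2 ⟨hp', hp'p⟩)).trans hpp'.le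

theorem RelDense.exists_closedBall_subset {d : ℕ} {R ρ : ℝ} {S G : Set (EuclideanSpace ℝ (Fin d))}
    (h : RelDense d R ρ S G) (hρ : 0 ≤ ρ) {x : EuclideanSpace ℝ (Fin d)} (hx : x ∈ G) :
    ∃ y, closedBall y ρ ⊆ S ∧ dist x y ≤ R := by
  obtain ⟨y, -, hy⟩ := h x hx
  exact ⟨y, fun z hz => (hy hz).2, dist_comm x y ▸ (hy (mem_closedBall_self hρ)).1⟩

theorem stmt_5_general (d : ℕ) (R ρ : ℝ) (hρ : 0 < ρ) (hρR : ρ ≤ R)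
    (G S : Set (EuclideanSpace ℝ (Fin d)))
    (hGc : Convex ℝ G) (hSG : S ⊆ G)
    (hdense : RelDense d R ρ S G) :
    ∃ T : Set (EuclideanSpace ℝ (Fin d)), T ⊆ S ∧
      (∀ p ∈ T, closedBall p ρ ⊆ S) ∧
      RelDense d (3 * R) ρ (⋃ p ∈ T, closedBall p ρ) G ∧
      closure G ⊆ ⋃ p ∈ T, closedBall p (3 * R) ∧
      (∀ p ∈ T, (T \ {p}).Nonempty →
        R ≤ infDist p (T \ {p}) ∧ infDist p (T \ {p}) ≤ 6 * R) := by
  have hR : 0 < R := hρ.trans_le hρR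
  obtain ⟨T, hTC, hTsep, hTnet⟩ := exists_separated_cover hR {y | closedBall y ρ ⊆ S}
  have hTS : T ⊆ S := fun p hp => hTC hp (mem_closedBall_self hρ.le)
  have hGnet : ∀ x ∈ G, ∃ p ∈ T, dist x p < 2 * R := by
    intro x hx
    obtain ⟨y, hyS, hxy⟩ := hdense.exists_closedBall_subset hρ.le hx
    obtain ⟨p, hp, hyp⟩ := hTnet y hyS
    exact ⟨p, hp, by linarith [dist_triangle x y p]⟩
  refine ⟨T, hTS, hTC, fun x hx => ?_, fun x hx => ?_, fun p hp hne =>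
    ⟨le_infDist_diff_singleton_of_pairwise hTsep hp hne, ?_⟩⟩
  · obtain ⟨p, hp, hxp⟩ := hGnet x hx
    refine ⟨p, mem_biUnion hp (mem_closedBall_self hρ.le), subset_inter ?_ ?_⟩
    · exact closedBall_subset_closedBall' (by linarith [dist_comm x p])
    · exact subset_biUnion_of_mem (u := fun p => closedBall p ρ) hp
  · obtain ⟨x', hx', hxx'⟩ := Metric.mem_closure_iff.1 hx R hR
    obtain ⟨p, hp, hx'p⟩ := hGnet x' hx'
    exact mem_biUnion hp (by rw [mem_closedBall]; linarith [dist_triangle x x' p])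
  · linarith [hGc.infDist_diff_singleton_le (hTS.trans hSG) hGnet hp hne]

theorem stmt_5 (d : ℕ) (R ρ : ℝ) (hρ : 0 < ρ) (hρR : ρ ≤ R)
    (G S : Set (EuclideanSpace ℝ (Fin d)))
    (hGo : IsOpen G) (hGc : Convex ℝ G) (hSG : S ⊆ G)
    (hdense : RelDense d R ρ S G) :
    ∃ T : Set (EuclideanSpace ℝ (Fin d)), T ⊆ S ∧
      (∀ p ∈ T, closedBall p ρ ⊆ S) ∧
      RelDense d (3 * R) ρ (⋃ p ∈ T, closedBall p ρ) G ∧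
      closure G ⊆ ⋃ p ∈ T, closedBall p (3 * R) ∧
      (∀ p ∈ T, (T \ {p}).Nonempty →
        R ≤ infDist p (T \ {p}) ∧ infDist p (T \ {p}) ≤ 6 * R) :=
  stmt_5_general d R ρ hρ hρR G S hGc hSG hdense
end
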